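/- arXiv:2005.08195 — 6 statements merged into one kernel-verified Lean document; each statement's English description precedes it below -/
import Mathlib

section
/- Let x₁,…,xₙ be positive reals, δᵢ ∈ {0,1}, m = ∑ δᵢ ≥ 1, and fix r < −1 and q ∈ ℝ, p ≥ 0. Then the double integral ∫₀^∞ ∫₀^∞ exp(−p/β) η^(mβ+r) β^(m+q) (∏ x_i^{δᵢβ}) exp(−(∑ x_i^β) η^β) dη dβ is infinite. -/
/-!
For `0 < β < (-1 - r) / (m + 1)` the exponent `m β + r` of `η` is at most `-1`, so the inner
integrand is bounded below near `η = 0` by a positive multiple of a non-integrable power `η ^ a`,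
and the inner integral is infinite. The outer integral is then infinite on a set of positive measure.
-/

open MeasureTheory Set Finset

theorem lintegral_rpow_Ioo_eq_top {a t : ℝ} (ha : a ≤ -1) (ht : 0 < t) :
    ∫⁻ η in Ioo 0 t, ENNReal.ofReal (η ^ a) = ⊤ := by
  by_contra h
  have hnonneg : 0 ≤ᵐ[volume.restrict (Ioo 0 t)] fun η : ℝ ↦ η ^ a := by
    filter_upwards [ae_restrict_mem measurableSet_Ioo] with η hη
    exact Real.rpow_nonneg hη.1.le a
  have hint : IntegrableOn (fun η : ℝ ↦ η ^ a) (Ioo 0 t) :=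
    (lintegral_ofReal_ne_top_iff_integrable
      (measurable_id.pow_const a).aestronglyMeasurable hnonneg).mp h
  rw [intervalIntegral.integrableOn_Ioo_rpow_iff ht] at hint
  linarith

theorem lintegral_mul_rpow_mul_exp_neg_rpow_eq_top {a β C c : ℝ} (ha : a ≤ -1) (hβ : 0 < β)
    (hC : 0 < C) (hc : 0 ≤ c) :
    ∫⁻ η in Ioi 0, ENNReal.ofReal (C * η ^ a * Real.exp (-c * η ^ β)) = ⊤ := by
  have hlower : ∀ η ∈ Ioo (0 : ℝ) 1,
      ENNReal.ofReal (C * Real.exp (-c)) * ENNReal.ofReal (η ^ a) ≤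
        ENNReal.ofReal (C * η ^ a * Real.exp (-c * η ^ β)) := by
    intro η hη
    have hpow : η ^ β ≤ 1 := Real.rpow_le_one hη.1.le hη.2.le hβ.le
    rw [← ENNReal.ofReal_mul (by positivity)]
    refine ENNReal.ofReal_le_ofReal ?_
    rw [mul_right_comm]
    exact mul_le_mul_of_nonneg_left (Real.exp_le_exp.mpr (by nlinarith))
      (mul_nonneg hC.le (Real.rpow_nonneg hη.1.le a))
  rw [eq_top_iff]
  calc ⊤ = ∫⁻ η in Ioo 0 1, ENNReal.ofReal (C * Real.exp (-c)) * ENNReal.ofReal (η ^ a) := by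
        rw [lintegral_const_mul _ (by fun_prop),
          lintegral_rpow_Ioo_eq_top ha one_pos, ENNReal.mul_top]
        simpa using mul_pos hC (Real.exp_pos _)
    _ ≤ ∫⁻ η in Ioo 0 1, ENNReal.ofReal (C * η ^ a * Real.exp (-c * η ^ β)) :=
        setLIntegral_mono_ae' measurableSet_Ioo (ae_of_all _ hlower)
    _ ≤ _ := lintegral_mono_set Ioo_subset_Ioi_self

theorem setLIntegral_Ioi_eq_top_of_forall_Ioo {f : ℝ → ENNReal} {b : ℝ} (hb : 0 < b)
    (hf : ∀ β ∈ Ioo 0 b, f β = ⊤) : ∫⁻ β in Ioi 0, f β = ⊤ := by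
  rw [eq_top_iff]
  calc ⊤ = ∫⁻ _ in Ioo (0 : ℝ) b, ⊤ := by simp [hb]
    _ = ∫⁻ β in Ioo 0 b, f β := (setLIntegral_congr_fun measurableSet_Ioo hf).symm
    _ ≤ _ := lintegral_mono_set Ioo_subset_Ioi_self

theorem stmt_8_general (n : ℕ) (x : Fin n → ℝ) (hx : ∀ i, 0 < x i) (δ : Fin n → ℕ)
    (m : ℕ) (r q p : ℝ) (hr : r < -1) :
    (∫⁻ β in Ioi (0:ℝ), ∫⁻ η in Ioi (0:ℝ),
        ENNReal.ofReal (Real.exp (-p / β) * η ^ ((m : ℝ) * β + r) * β ^ ((m : ℝ) + q) *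
          (∏ i, x i ^ ((δ i : ℝ) * β)) * Real.exp (-(∑ i, x i ^ β) * η ^ β))) = ⊤ := by
  refine setLIntegral_Ioi_eq_top_of_forall_Ioo (b := (-1 - r) / (m + 1))
    (div_pos (by linarith) (by positivity)) ?_
  intro β ⟨hβ, hβb⟩
  rw [lt_div_iff₀ (by positivity)] at hβb
  have hexp : (m : ℝ) * β + r ≤ -1 := by nlinarith
  have hC : 0 < Real.exp (-p / β) * β ^ ((m : ℝ) + q) * ∏ i, x i ^ ((δ i : ℝ) * β) :=
    mul_pos (mul_pos (Real.exp_pos _) (Real.rpow_pos_of_pos hβ _))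
      (prod_pos fun i _ ↦ Real.rpow_pos_of_pos (hx i) _)
  have hc : 0 ≤ ∑ i, x i ^ β := sum_nonneg fun i _ ↦ (Real.rpow_pos_of_pos (hx i) β).le
  refine (setLIntegral_congr_fun measurableSet_Ioi fun η _ ↦ ?_).trans
    (lintegral_mul_rpow_mul_exp_neg_rpow_eq_top hexp hβ hC hc)
  congr 1
  ring

theorem stmt_8 (n : ℕ) (x : Fin n → ℝ) (hx : ∀ i, 0 < x i) (δ : Fin n → ℕ)
    (hδ : ∀ i, δ i = 0 ∨ δ i = 1) (m : ℕ) (hm : m = ∑ i, δ i) (hm1 : 1 ≤ m)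
    (r q p : ℝ) (hr : r < -1) (hp : 0 ≤ p) :
    (∫⁻ β in Ioi (0:ℝ), ∫⁻ η in Ioi (0:ℝ),
        ENNReal.ofReal (Real.exp (-p / β) * η ^ ((m : ℝ) * β + r) * β ^ ((m : ℝ) + q) *
          (∏ i, x i ^ ((δ i : ℝ) * β)) * Real.exp (-(∑ i, x i ^ β) * η ^ β))) = ⊤ :=
  stmt_8_general n x hx δ m r q p hr
end

section
/- Let x₁,…,xₙ be positive reals with censoring indicators δᵢ ∈ {0,1}, m = ∑ δᵢ, and fix r > −1, q ∈ ℝ, p ≥ 0. Then the double integral ∫₀^∞ ∫₀^∞ exp(−p/β) η^(mβ+r) β^(m+q) (∏ x_i^{δᵢβ}) exp(−(∑ x_i^β) η^β) dη dβ is infinite. -/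
/-!
For `β ∈ (0, 1)` put `T = exp (K / β)` with `K a = p + 1`, where `a = min r 0 + 1 ∈ (0, 1]`.
On `η ∈ (T / 2, T)` the integrand is at least a constant times `exp (-p / β) β ^ (m + q) T ^ (a - 1)`,
so the inner integral is at least a constant times `β ^ (m + q) exp (1 / β)`, since `T ^ a`
cancels `exp (-p / β)`. This dominates `β⁻¹` near `0`, whose integral diverges.
-/

open MeasureTheory Set Finset Real

lemma min_one_le_rpow {x β : ℝ} (hx : 0 < x) (hβ₀ : 0 ≤ β) (hβ₁ : β ≤ 1) : min x 1 ≤ x ^ β := by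
  rcases le_total x 1 with h | h
  · refine (min_le_left x 1).trans ?_
    simpa using rpow_le_rpow_of_exponent_ge hx h hβ₁
  · exact (min_le_right x 1).trans (one_le_rpow h hβ₀)

lemma rpow_le_max_one {x β : ℝ} (hx : 0 ≤ x) (hβ₀ : 0 ≤ β) (hβ₁ : β ≤ 1) : x ^ β ≤ max x 1 := by
  rcases le_total x 1 with h | h
  · exact (rpow_le_one hx h hβ₀).trans (le_max_right x 1)
  · refine le_trans ?_ (le_max_left x 1)
    simpa using rpow_le_rpow_of_exponent_le h hβ₁

section Fintype

variable {ι : Type*} [Fintype ι] {x : ι → ℝ} {β : ℝ}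

lemma prod_min_one_pow_le_prod_rpow (δ : ι → ℕ) (hx : ∀ i, 0 < x i) (hβ₀ : 0 ≤ β) (hβ₁ : β ≤ 1) :
    ∏ i, min (x i) 1 ^ δ i ≤ ∏ i, x i ^ ((δ i : ℝ) * β) := by
  refine prod_le_prod (fun i _ => by have := hx i; positivity) fun i _ => ?_
  rw [mul_comm, rpow_mul (hx i).le, rpow_natCast]
  exact pow_le_pow_left₀ (by have := hx i; positivity) (min_one_le_rpow (hx i) hβ₀ hβ₁) _

lemma sum_rpow_le_sum_max_one (hx : ∀ i, 0 ≤ x i) (hβ₀ : 0 ≤ β) (hβ₁ : β ≤ 1) :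
    ∑ i, x i ^ β ≤ ∑ i, max (x i) 1 :=
  sum_le_sum fun i _ => rpow_le_max_one (hx i) hβ₀ hβ₁

end Fintype

lemma exists_pos_mul_inv_le_rpow_mul_exp_inv (s : ℝ) :
    ∃ c > 0, ∀ β ∈ Ioo (0 : ℝ) 1, c * β⁻¹ ≤ β ^ s * exp β⁻¹ := by
  set N := ⌈s + 1⌉₊
  refine ⟨(N.factorial : ℝ)⁻¹, by positivity, fun β ⟨hβ₀, hβ₁⟩ => ?_⟩
  calc (N.factorial : ℝ)⁻¹ * β⁻¹ ≤ (N.factorial : ℝ)⁻¹ * β ^ (s - N) := by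
        gcongr
        rw [← rpow_neg_one]
        exact rpow_le_rpow_of_exponent_ge hβ₀ hβ₁.le (by linarith [Nat.le_ceil (s + 1)])
    _ = β ^ s * (β⁻¹ ^ N / N.factorial) := by
        rw [rpow_sub hβ₀, rpow_natCast, inv_pow]; ring
    _ ≤ β ^ s * exp β⁻¹ := by
        gcongr; exact pow_div_factorial_le_exp _ (by positivity) N

lemma setLIntegral_Ioo_zero_one_ofReal_inv : ∫⁻ β in Ioo (0 : ℝ) 1, ENNReal.ofReal β⁻¹ = ⊤ := by
  by_contra h
  have hint : IntegrableOn (fun β : ℝ => β⁻¹) (Ioo 0 1) :=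
    (lintegral_ofReal_ne_top_iff_integrable measurable_inv.aestronglyMeasurable
      (ae_restrict_of_forall_mem measurableSet_Ioo fun β hβ => inv_nonneg.2 hβ.1.le)).1 h
  rw [← intervalIntegrable_iff_integrableOn_Ioo_of_le zero_le_one, intervalIntegrable_inv_iff]
    at hint
  simp at hint

lemma setLIntegral_Ioi_eq_top_of_ofReal_mul_inv_le {f : ℝ → ENNReal} {c : ℝ} (hc : 0 < c)
    (hf : ∀ β ∈ Ioo (0 : ℝ) 1, ENNReal.ofReal (c * β⁻¹) ≤ f β) : ∫⁻ β in Ioi 0, f β = ⊤ := by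
  refine eq_top_iff.2 ?_
  calc ⊤ = ∫⁻ β in Ioo (0 : ℝ) 1, ENNReal.ofReal (c * β⁻¹) := by
        simp_rw [ENNReal.ofReal_mul hc.le]
        rw [lintegral_const_mul' _ _ ENNReal.ofReal_ne_top, setLIntegral_Ioo_zero_one_ofReal_inv,
          ENNReal.mul_top (ENNReal.ofReal_pos.2 hc).ne']
    _ ≤ ∫⁻ β in Ioo 0 1, f β := setLIntegral_mono' measurableSet_Ioo hf
    _ ≤ ∫⁻ β in Ioi 0, f β := lintegral_mono_set Ioo_subset_Ioi_self

lemma ofReal_le_setLIntegral_Ioi_rpow_mul_exp {a s S β T : ℝ} (ha : a ≤ 1) (hs : a - 1 ≤ s)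
    (hS : 0 ≤ S) (hβ : 0 ≤ β) (hT : 2 ≤ T) :
    ENNReal.ofReal (T ^ a / 2 * exp (-S * T ^ β)) ≤
      ∫⁻ η in Ioi 0, ENNReal.ofReal (η ^ s * exp (-S * η ^ β)) := by
  have hT₀ : 0 < T := by linarith
  calc ENNReal.ofReal (T ^ a / 2 * exp (-S * T ^ β))
      = ∫⁻ _ in Ioo (T / 2) T, ENNReal.ofReal (T ^ (a - 1) * exp (-S * T ^ β)) := by
        rw [setLIntegral_const, Real.volume_Ioo, ← ENNReal.ofReal_mul (by positivity),
          rpow_sub hT₀, rpow_one]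
        congr 1
        field_simp
        ring
    _ ≤ ∫⁻ η in Ioo (T / 2) T, ENNReal.ofReal (η ^ s * exp (-S * η ^ β)) := by
        refine setLIntegral_mono' measurableSet_Ioo fun η ⟨hη₁, hη₂⟩ => ?_
        have hη : 1 ≤ η := by linarith
        have hpow : T ^ (a - 1) ≤ η ^ s :=
          calc T ^ (a - 1) ≤ η ^ (a - 1) := rpow_le_rpow_of_nonpos (by linarith) hη₂.le (by linarith)
            _ ≤ η ^ s := rpow_le_rpow_of_exponent_le hη hs
        have hexp : -S * T ^ β ≤ -S * η ^ β :=
          mul_le_mul_of_nonpos_left (rpow_le_rpow (by linarith) hη₂.le hβ) (neg_nonpos.2 hS)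
        gcongr
    _ ≤ ∫⁻ η in Ioi 0, ENNReal.ofReal (η ^ s * exp (-S * η ^ β)) :=
        lintegral_mono_set fun η hη => (by linarith [hη.1] : (0 : ℝ) < η)

section Weibull

variable {n : ℕ} (x : Fin n → ℝ) (δ : Fin n → ℕ) (m : ℕ) (r q p : ℝ)

noncomputable def weibullPosteriorDensity (β η : ℝ) : ℝ :=
  exp (-p / β) * η ^ ((m : ℝ) * β + r) * β ^ ((m : ℝ) + q) *
    (∏ i, x i ^ ((δ i : ℝ) * β)) * exp (-(∑ i, x i ^ β) * η ^ β)

variable {x r p}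

lemma lintegral_weibullPosteriorDensity_eq_mul (hx : ∀ i, 0 < x i) {β : ℝ} (hβ : 0 ≤ β) :
    ∫⁻ η in Ioi 0, ENNReal.ofReal (weibullPosteriorDensity x δ m r q p β η) =
      ENNReal.ofReal (exp (-p / β) * β ^ ((m : ℝ) + q) * ∏ i, x i ^ ((δ i : ℝ) * β)) *
        ∫⁻ η in Ioi 0, ENNReal.ofReal (η ^ ((m : ℝ) * β + r) * exp (-(∑ i, x i ^ β) * η ^ β)) := by
  have hA : 0 ≤ exp (-p / β) * β ^ ((m : ℝ) + q) * ∏ i, x i ^ ((δ i : ℝ) * β) := by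
    have : 0 ≤ ∏ i, x i ^ ((δ i : ℝ) * β) := prod_nonneg fun i _ => (rpow_pos_of_pos (hx i) _).le
    positivity
  rw [← lintegral_const_mul' _ _ ENNReal.ofReal_ne_top]
  refine setLIntegral_congr_fun measurableSet_Ioi fun η _ => ?_
  rw [← ENNReal.ofReal_mul hA, weibullPosteriorDensity]
  congr 1
  ring

lemma exists_pos_ofReal_mul_le_lintegral_weibullPosteriorDensity (hx : ∀ i, 0 < x i)
    (hr : -1 < r) (hp : 0 ≤ p) :
    ∃ B > 0, ∀ β ∈ Ioo (0 : ℝ) 1, ENNReal.ofReal (B * (β ^ ((m : ℝ) + q) * exp β⁻¹)) ≤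
      ∫⁻ η in Ioi 0, ENNReal.ofReal (weibullPosteriorDensity x δ m r q p β η) := by
  set a := min r 0 + 1
  have ha₀ : 0 < a := by linarith [lt_min hr neg_one_lt_zero]
  have ha₁ : a ≤ 1 := by linarith [min_le_right r 0]
  set K := (p + 1) / a
  have hK : 1 ≤ K := (one_le_div ha₀).2 (by linarith)
  set C := ∑ i, max (x i) 1
  set D := ∏ i, min (x i) 1 ^ δ i
  have hD : 0 < D := prod_pos fun i _ => pow_pos (lt_min (hx i) one_pos) _
  refine ⟨D * exp (-C * exp K) / 2, by positivity, fun β ⟨hβ₀, hβ₁⟩ => ?_⟩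
  set T := exp (K / β)
  have hT : 2 ≤ T := by
    have : K ≤ K / β := le_div_self (by linarith) hβ₀ hβ₁.le
    linarith [add_one_le_exp (K / β)]
  have hTa : T ^ a = exp ((p + 1) / β) := by
    rw [← exp_mul, div_mul_eq_mul_div, div_mul_cancel₀ _ ha₀.ne']
  have hTβ : T ^ β = exp K := by rw [← exp_mul, div_mul_cancel₀ _ hβ₀.ne']
  set P := ∏ i, x i ^ ((δ i : ℝ) * β)
  set S := ∑ i, x i ^ β
  have hP : 0 ≤ P := prod_nonneg fun i _ => (rpow_pos_of_pos (hx i) _).le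
  have hS : 0 ≤ S := sum_nonneg fun i _ => (rpow_pos_of_pos (hx i) _).le
  rw [lintegral_weibullPosteriorDensity_eq_mul δ m q hx hβ₀.le]
  calc ENNReal.ofReal (D * exp (-C * exp K) / 2 * (β ^ ((m : ℝ) + q) * exp β⁻¹))
      ≤ ENNReal.ofReal (exp (-p / β) * β ^ ((m : ℝ) + q) * P) *
          ENNReal.ofReal (T ^ a / 2 * exp (-S * T ^ β)) := by
        rw [← ENNReal.ofReal_mul (by positivity), hTa, hTβ]
        refine ENNReal.ofReal_le_ofReal ?_
        have hsplit : exp β⁻¹ = exp (-p / β) * exp ((p + 1) / β) := by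
          rw [← exp_add]; congr 1; field_simp; ring
        have hDP : D ≤ P := prod_min_one_pow_le_prod_rpow δ hx hβ₀.le hβ₁.le
        have hSC : S ≤ C := sum_rpow_le_sum_max_one (fun i => (hx i).le) hβ₀.le hβ₁.le
        calc D * exp (-C * exp K) / 2 * (β ^ ((m : ℝ) + q) * exp β⁻¹)
            = exp (-p / β) * β ^ ((m : ℝ) + q) * exp ((p + 1) / β) / 2 *
                (D * exp (-C * exp K)) := by rw [hsplit]; ring
          _ ≤ exp (-p / β) * β ^ ((m : ℝ) + q) * exp ((p + 1) / β) / 2 *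
                (P * exp (-S * exp K)) := by gcongr
          _ = _ := by ring
    _ ≤ _ := by
        gcongr
        exact ofReal_le_setLIntegral_Ioi_rpow_mul_exp ha₁ (by nlinarith [min_le_left r 0]) hS
          hβ₀.le hT

end Weibull

theorem stmt_9_general (n : ℕ) (x : Fin n → ℝ) (hx : ∀ i, 0 < x i) (δ : Fin n → ℕ)
    (m : ℕ) (r q p : ℝ) (hr : -1 < r) (hp : 0 ≤ p) :
    (∫⁻ β in Ioi (0:ℝ), ∫⁻ η in Ioi (0:ℝ),
        ENNReal.ofReal (Real.exp (-p / β) * η ^ ((m : ℝ) * β + r) * β ^ ((m : ℝ) + q) *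
          (∏ i, x i ^ ((δ i : ℝ) * β)) * Real.exp (-(∑ i, x i ^ β) * η ^ β))) = ⊤ := by
  obtain ⟨B, hB, hinner⟩ :=
    exists_pos_ofReal_mul_le_lintegral_weibullPosteriorDensity δ m q hx hr hp
  obtain ⟨c, hc, hexp⟩ := exists_pos_mul_inv_le_rpow_mul_exp_inv ((m : ℝ) + q)
  refine setLIntegral_Ioi_eq_top_of_ofReal_mul_inv_le (mul_pos hB hc) fun β hβ => ?_
  refine le_trans (ENNReal.ofReal_le_ofReal ?_) (hinner β hβ)
  rw [mul_assoc]
  exact mul_le_mul_of_nonneg_left (hexp β hβ) hB.le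

theorem stmt_9 (n : ℕ) (x : Fin n → ℝ) (hx : ∀ i, 0 < x i) (δ : Fin n → ℕ)
    (hδ : ∀ i, δ i = 0 ∨ δ i = 1) (m : ℕ) (hm : m = ∑ i, δ i) 
    (r q p : ℝ) (hr : -1 < r) (hp : 0 ≤ p) :
    (∫⁻ β in Ioi (0:ℝ), ∫⁻ η in Ioi (0:ℝ),
        ENNReal.ofReal (Real.exp (-p / β) * η ^ ((m : ℝ) * β + r) * β ^ ((m : ℝ) + q) *
          (∏ i, x i ^ ((δ i : ℝ) * β)) * Real.exp (-(∑ i, x i ^ β) * η ^ β))) = ⊤ :=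
  stmt_9_general n x hx δ m r q p hr hp
end

section
/- Let x₁,…,xₙ be positive reals with δᵢ ∈ {0,1}, m = ∑ δᵢ ≥ 2, and suppose at least two non-censored observations are distinct (i.e., there exist i ≠ j with δᵢ = δⱼ = 1 and xᵢ ≠ xⱼ). Then for the prior π(η,β) = η^(−1) β^q, the integral d = ∫₀^∞ ∫₀^∞ η^(mβ−1) β^(m+q) (∏ x_i^{δᵢβ}) exp(−(∑ x_i^β) η^β) dη dβ is finite if and only if q > −m. -/
/-!
Integrating out `η` with the Gamma integral leaves the `β`-marginal `Γ(m) β^(m+q-1) w(β)` with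
`w(β) = ∏_{δᵢ=1} xᵢ^β / (∑ xᵢ^β)^m`. Since `w` is continuous and positive at `β = 0`, near `0`
the marginal behaves like `β^(m+q-1)`, which is integrable iff `q > -m`. For a non-censored `xᵢ`
and any `xⱼ > xᵢ`, bounding all other factors of the product by `∑ xₖ^β` and one more factor of
the sum below by `xⱼ^β` gives `w(β) ≤ (xᵢ / xⱼ)^β`, so the marginal decays exponentially.
-/

open MeasureTheory Set Finset Filter Topology

lemma ENNReal.mul_ne_top_iff_right {a b : ENNReal} (ha₀ : a ≠ 0) (ha : a ≠ ⊤) :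
    a * b ≠ ⊤ ↔ b ≠ ⊤ := by
  simp [ENNReal.mul_eq_top, ha₀, ha]

lemma lintegral_rpow_mul_exp_neg_mul_rpow {p s b : ℝ} (hp : 0 < p) (hs : -1 < s) (hb : 0 < b) :
    ∫⁻ x in Ioi (0 : ℝ), ENNReal.ofReal (x ^ s * Real.exp (-b * x ^ p)) =
      ENNReal.ofReal (b ^ (-(s + 1) / p) * (1 / p) * Real.Gamma ((s + 1) / p)) := by
  rw [← integral_rpow_mul_exp_neg_mul_rpow hp hs hb,
    ofReal_integral_eq_lintegral_ofReal (integrableOn_rpow_mul_exp_neg_mul_rpow hs hp hb)]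
  filter_upwards [ae_restrict_mem measurableSet_Ioi] with y hy using
    mul_nonneg (Real.rpow_nonneg (le_of_lt hy) _) (Real.exp_pos _).le

lemma lintegral_rpow_mul_sub_one_mul_exp_neg_mul_rpow {m β b : ℝ} (hm : 0 < m) (hβ : 0 < β)
    (hb : 0 < b) :
    ∫⁻ η in Ioi (0 : ℝ), ENNReal.ofReal (η ^ (m * β - 1) * Real.exp (-b * η ^ β)) =
      ENNReal.ofReal (Real.Gamma m / (β * b ^ m)) := by
  rw [lintegral_rpow_mul_exp_neg_mul_rpow hβ (by nlinarith) hb, sub_add_cancel,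
    neg_div, mul_div_cancel_right₀ _ hβ.ne', Real.rpow_neg hb.le]
  congr 1
  field_simp

lemma lintegral_rpow_mul_eq_top {t : ℝ} {f : ℝ → ℝ} (ht : t ≤ -1) (hf : ContinuousAt f 0)
    (hf0 : 0 < f 0) :
    ∫⁻ β in Ioi (0 : ℝ), ENNReal.ofReal (β ^ t * f β) = ⊤ := by
  obtain ⟨ε, hε, hεf⟩ : ∃ ε ∈ Ioi (0 : ℝ), Ioo 0 ε ⊆ {β | f 0 / 2 < f β} :=
    mem_nhdsGT_iff_exists_Ioo_subset.mp <|
      (hf.tendsto.mono_left nhdsWithin_le_nhds).eventually_const_lt (half_lt_self hf0)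
  have hrpow : ∫⁻ β in Ioo 0 ε, ENNReal.ofReal (β ^ t) = ⊤ := by
    by_contra h
    have hint : IntegrableOn (fun β : ℝ => β ^ t) (Ioo 0 ε) :=
      (lintegral_ofReal_ne_top_iff_integrable (measurable_id.pow_const t).aestronglyMeasurable
        (ae_restrict_of_forall_mem measurableSet_Ioo fun β hβ => Real.rpow_nonneg hβ.1.le t)).mp h
    rw [intervalIntegral.integrableOn_Ioo_rpow_iff hε] at hint
    linarith
  rw [eq_top_iff]
  calc ⊤ = ∫⁻ β in Ioo 0 ε, ENNReal.ofReal (f 0 / 2) * ENNReal.ofReal (β ^ t) := by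
        rw [lintegral_const_mul' _ _ ENNReal.ofReal_ne_top, hrpow,
          ENNReal.mul_top (by simpa using hf0)]
    _ ≤ ∫⁻ β in Ioo 0 ε, ENNReal.ofReal (β ^ t * f β) := by
        refine setLIntegral_mono' measurableSet_Ioo fun β hβ => ?_
        rw [← ENNReal.ofReal_mul (by linarith), mul_comm]
        exact ENNReal.ofReal_le_ofReal <|
          mul_le_mul_of_nonneg_left (hεf hβ).le (Real.rpow_nonneg hβ.1.le t)
    _ ≤ ∫⁻ β in Ioi 0, ENNReal.ofReal (β ^ t * f β) := lintegral_mono_set Ioo_subset_Ioi_self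

lemma lintegral_rpow_mul_ne_top {t r : ℝ} {f : ℝ → ℝ} (ht : -1 < t) (hr0 : 0 < r) (hr1 : r < 1)
    (hf : ∀ β ∈ Ioi (0 : ℝ), f β ≤ r ^ β) :
    ∫⁻ β in Ioi (0 : ℝ), ENNReal.ofReal (β ^ t * f β) ≠ ⊤ := by
  have hc : 0 < -Real.log r := neg_pos.mpr (Real.log_neg hr0 hr1)
  refine ne_top_of_le_ne_top
    (integrableOn_rpow_mul_exp_neg_mul_rpow ht one_pos hc).lintegral_lt_top.ne
    (setLIntegral_mono' measurableSet_Ioi fun β hβ => ENNReal.ofReal_le_ofReal ?_)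
  have hdecay : r ^ β = Real.exp (- -Real.log r * β ^ (1 : ℝ)) := by
    rw [Real.rpow_def_of_pos hr0, Real.rpow_one, neg_neg]
  exact mul_le_mul_of_nonneg_left (hdecay ▸ hf β hβ) (Real.rpow_nonneg (le_of_lt hβ) t)

lemma lintegral_rpow_mul_ne_top_iff {t r : ℝ} {f : ℝ → ℝ} (hf : ContinuousAt f 0)
    (hf0 : 0 < f 0) (hr0 : 0 < r) (hr1 : r < 1) (hfr : ∀ β ∈ Ioi (0 : ℝ), f β ≤ r ^ β) :
    ∫⁻ β in Ioi (0 : ℝ), ENNReal.ofReal (β ^ t * f β) ≠ ⊤ ↔ -1 < t := by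
  refine ⟨fun h => ?_, fun ht => lintegral_rpow_mul_ne_top ht hr0 hr1 hfr⟩
  by_contra ht
  exact h (lintegral_rpow_mul_eq_top (not_lt.mp ht) hf hf0)

lemma prod_div_sum_pow_card_le {ι : Type*} [Fintype ι] {y : ι → ℝ} (hy : ∀ k, 0 < y k)
    {U : Finset ι} {i : ι} (hi : i ∈ U) (j : ι) :
    (∏ k ∈ U, y k) / (∑ k, y k) ^ #U ≤ y i / y j := by
  classical
  set S := ∑ k, y k
  have hyS : ∀ k, y k ≤ S := fun k => single_le_sum (fun k _ => (hy k).le) (mem_univ k)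
  have hS : 0 < S := (hy i).trans_le (hyS i)
  have hprod : ∏ k ∈ U.erase i, y k ≤ S ^ #(U.erase i) :=
    (prod_le_prod (fun k _ => (hy k).le) fun k _ => hyS k).trans_eq (prod_const S)
  rw [div_le_div_iff₀ (pow_pos hS _) (hy j), ← mul_prod_erase U y hi, ← card_erase_add_one hi,
    pow_succ, mul_assoc]
  exact mul_le_mul_of_nonneg_left (mul_le_mul hprod (hyS j) (hy j).le (pow_nonneg hS.le _))
    (hy i).le

lemma sum_eq_card_filter_eq_one {ι : Type*} {s : Finset ι} {δ : ι → ℕ}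
    (hδ : ∀ i, δ i = 0 ∨ δ i = 1) :
    ∑ i ∈ s, δ i = #{i ∈ s | δ i = 1} := by
  rw [card_filter]
  exact sum_congr rfl fun i _ => by rcases hδ i with h | h <;> simp [h]

lemma prod_rpow_natCast_mul_eq_prod_filter {ι : Type*} {s : Finset ι} {δ : ι → ℕ}
    (hδ : ∀ i, δ i = 0 ∨ δ i = 1) (x : ι → ℝ) (β : ℝ) :
    ∏ i ∈ s, x i ^ ((δ i : ℝ) * β) = ∏ i ∈ s with δ i = 1, x i ^ β := by
  rw [prod_filter]
  exact prod_congr rfl fun i _ => by rcases hδ i with h | h <;> simp [h]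

section PosteriorWeight

variable {ι : Type*} [Fintype ι] {x : ι → ℝ}

/-- With `U` the non-censored indices and `m = #U`, the `β`-marginal of the posterior is
`Γ(m) β^(m+q-1) posteriorWeight x U β`. -/
noncomputable def posteriorWeight (x : ι → ℝ) (U : Finset ι) (β : ℝ) : ℝ :=
  (∏ k ∈ U, x k ^ β) / (∑ k, x k ^ β) ^ #U

lemma sum_rpow_pos [Nonempty ι] (hx : ∀ k, 0 < x k) (β : ℝ) : 0 < ∑ k, x k ^ β :=
  sum_pos (fun k _ => Real.rpow_pos_of_pos (hx k) β) univ_nonempty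

lemma continuous_posteriorWeight [Nonempty ι] (hx : ∀ k, 0 < x k) (U : Finset ι) :
    Continuous (posteriorWeight x U) := by
  have hpow : ∀ k, Continuous fun β : ℝ => x k ^ β := fun k =>
    continuous_const.rpow continuous_id fun _ => Or.inl (hx k).ne'
  exact (continuous_finsetProd _ fun k _ => hpow k).div
    ((continuous_finsetSum _ fun k _ => hpow k).pow _)
    fun β => (pow_pos (sum_rpow_pos hx β) _).ne'

lemma posteriorWeight_pos [Nonempty ι] (hx : ∀ k, 0 < x k) (U : Finset ι) (β : ℝ) :
    0 < posteriorWeight x U β :=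
  div_pos (prod_pos fun k _ => Real.rpow_pos_of_pos (hx k) β) (pow_pos (sum_rpow_pos hx β) _)

lemma posteriorWeight_le (hx : ∀ k, 0 < x k) {U : Finset ι} {i : ι} (hi : i ∈ U) (j : ι)
    (β : ℝ) : posteriorWeight x U β ≤ (x i / x j) ^ β := by
  rw [Real.div_rpow (hx i).le (hx j).le]
  exact prod_div_sum_pow_card_le (fun k => Real.rpow_pos_of_pos (hx k) β) hi j

lemma lintegral_posterior_eq (hx : ∀ k, 0 < x k) {U : Finset ι} (hU : U.Nonempty)
    (q : ℝ) :
    ∫⁻ β in Ioi (0 : ℝ), ∫⁻ η in Ioi (0 : ℝ),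
        ENNReal.ofReal (η ^ ((#U : ℝ) * β - 1) * β ^ ((#U : ℝ) + q) *
          (∏ k ∈ U, x k ^ β) * Real.exp (-(∑ k, x k ^ β) * η ^ β)) =
      ENNReal.ofReal (Real.Gamma #U) *
        ∫⁻ β in Ioi (0 : ℝ), ENNReal.ofReal (β ^ ((#U : ℝ) + q - 1) * posteriorWeight x U β) := by
  have : Nonempty ι := let ⟨i, _⟩ := hU; ⟨i⟩
  have hm : (0 : ℝ) < #U := by exact_mod_cast hU.card_pos
  rw [← lintegral_const_mul' _ _ ENNReal.ofReal_ne_top]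
  refine setLIntegral_congr_fun measurableSet_Ioi fun β (hβ : 0 < β) => ?_
  set C := β ^ ((#U : ℝ) + q) * ∏ k ∈ U, x k ^ β with hCdef
  have hC : 0 ≤ C := mul_nonneg (Real.rpow_nonneg hβ.le _)
    (prod_nonneg fun k _ => (Real.rpow_pos_of_pos (hx k) β).le)
  calc _ = ∫⁻ η in Ioi (0 : ℝ), ENNReal.ofReal C *
          ENNReal.ofReal (η ^ ((#U : ℝ) * β - 1) * Real.exp (-(∑ k, x k ^ β) * η ^ β)) :=
        lintegral_congr fun η => by rw [← ENNReal.ofReal_mul hC, hCdef]; ring_nf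
    _ = ENNReal.ofReal C * ENNReal.ofReal (Real.Gamma #U / (β * (∑ k, x k ^ β) ^ (#U : ℝ))) := by
        rw [lintegral_const_mul' _ _ ENNReal.ofReal_ne_top,
          lintegral_rpow_mul_sub_one_mul_exp_neg_mul_rpow hm hβ (sum_rpow_pos hx β)]
    _ = _ := by
        rw [← ENNReal.ofReal_mul hC, ← ENNReal.ofReal_mul (Real.Gamma_pos_of_pos hm).le]
        congr 1
        rw [hCdef, posteriorWeight, Real.rpow_natCast, Real.rpow_sub_one hβ.ne']
        field_simp

end PosteriorWeight

theorem stmt_10_general (n : ℕ) (x : Fin n → ℝ) (hx : ∀ i, 0 < x i) (δ : Fin n → ℕ)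
    (hδ : ∀ i, δ i = 0 ∨ δ i = 1) (m : ℕ) (hm : m = ∑ i, δ i)
    (hdist : ∃ i j, i ≠ j ∧ δ i = 1 ∧ δ j = 1 ∧ x i ≠ x j) (q : ℝ) :
    (∫⁻ β in Ioi (0:ℝ), ∫⁻ η in Ioi (0:ℝ),
        ENNReal.ofReal (η ^ ((m : ℝ) * β - 1) * β ^ ((m : ℝ) + q) *
          (∏ i, x i ^ ((δ i : ℝ) * β)) * Real.exp (-(∑ i, x i ^ β) * η ^ β))) ≠ ⊤ ↔
      -(m : ℝ) < q := by
  obtain ⟨i, j, hi, hlt⟩ : ∃ i j, δ i = 1 ∧ x i < x j := by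
    obtain ⟨i, j, -, hi, hj, hne⟩ := hdist
    rcases hne.lt_or_gt with h | h
    exacts [⟨i, j, hi, h⟩, ⟨j, i, hj, h⟩]
  have : Nonempty (Fin n) := ⟨i⟩
  set U : Finset (Fin n) := {k | δ k = 1}
  have hiU : i ∈ U := by simp [U, hi]
  obtain rfl : m = #U := hm.trans (sum_eq_card_filter_eq_one hδ)
  simp only [prod_rpow_natCast_mul_eq_prod_filter hδ]
  have hΓ : 0 < Real.Gamma #U := Real.Gamma_pos_of_pos (by exact_mod_cast card_pos.mpr ⟨i, hiU⟩)
  rw [lintegral_posterior_eq hx ⟨i, hiU⟩,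
    ENNReal.mul_ne_top_iff_right (ENNReal.ofReal_pos.mpr hΓ).ne' ENNReal.ofReal_ne_top,
    lintegral_rpow_mul_ne_top_iff (continuous_posteriorWeight hx U).continuousAt
      (posteriorWeight_pos hx U 0) (div_pos (hx i) (hx j)) ((div_lt_one (hx j)).mpr hlt)
      fun β _ => posteriorWeight_le hx hiU j β]
  constructor <;> intro <;> linarith

theorem stmt_10 (n : ℕ) (x : Fin n → ℝ) (hx : ∀ i, 0 < x i) (δ : Fin n → ℕ)
    (hδ : ∀ i, δ i = 0 ∨ δ i = 1) (m : ℕ) (hm : m = ∑ i, δ i) (hm2 : 2 ≤ m)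
    (hdist : ∃ i j, i ≠ j ∧ δ i = 1 ∧ δ j = 1 ∧ x i ≠ x j) (q : ℝ) :
    (∫⁻ β in Ioi (0:ℝ), ∫⁻ η in Ioi (0:ℝ),
        ENNReal.ofReal (η ^ ((m : ℝ) * β - 1) * β ^ ((m : ℝ) + q) *
          (∏ i, x i ^ ((δ i : ℝ) * β)) * Real.exp (-(∑ i, x i ^ β) * η ^ β))) ≠ ⊤ ↔
      -(m : ℝ) < q :=
  stmt_10_general n x hx δ hδ m hm hdist q
end

section
/- Under the Weibull model with prior π(η,β) ∝ η^(−1) β^q where the posterior is proper (m ≥ 2, at least two distinct uncensored observations, q > −m), for every k > 0 the posterior expectation of β^k is finite: ∫₀^∞ ∫₀^∞ β^k · η^(mβ−1) β^(m+q) (∏ x_i^{δᵢβ}) exp(−(∑ x_i^β) η^β) dη dβ < ∞. -/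
/-!
Integrating out η is a Gamma integral: with `S = ∑ xᵢ ^ β`,
`∫₀^∞ η ^ (mβ - 1) exp (-S η ^ β) dη = Γ(m) / (β S ^ m)`, so what remains to integrate in β is
`Γ(m) β ^ (k + m + q - 1) ∏ xᵢ ^ (δᵢ β) / S ^ m`. If `δ_b = 1` and `x_b < x_a`, then with
`yᵢ = xᵢ ^ β` we have `∏ yᵢ ^ δᵢ ≤ y_b S ^ (m - 1)` and `y_a ≤ S`, so the ratio is at most
`(x_b / x_a) ^ β`, which decays exponentially; the β-integrand is then of Gamma type, integrable
because `k + m + q > 0`.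
-/

open MeasureTheory Set Finset

theorem prod_pow_mul_sum_le {ι R : Type*} [Fintype ι] [CommSemiring R] [PartialOrder R]
    [IsOrderedRing R] {y : ι → R} (hy : ∀ i, 0 ≤ y i) {δ : ι → ℕ} {b : ι} (hb : δ b = 1) :
    (∏ i, y i ^ δ i) * ∑ i, y i ≤ y b * (∑ i, y i) ^ ∑ i, δ i := by
  classical
  set S := ∑ i, y i
  have hyS : ∀ i, y i ≤ S := fun i => single_le_sum (fun j _ => hy j) (mem_univ i)
  have hrest : ∏ i ∈ univ.erase b, y i ^ δ i ≤ S ^ ∑ i ∈ univ.erase b, δ i := by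
    rw [← prod_pow_eq_pow_sum]
    exact prod_le_prod (fun i _ => pow_nonneg (hy i) _)
      fun i _ => pow_le_pow_left₀ (hy i) (hyS i) _
  rw [← mul_prod_erase univ _ (mem_univ b), ← add_sum_erase univ _ (mem_univ b), hb, pow_one,
    pow_add, pow_one]
  calc y b * (∏ i ∈ univ.erase b, y i ^ δ i) * S ≤ y b * S ^ (∑ i ∈ univ.erase b, δ i) * S :=
        mul_le_mul_of_nonneg_right (mul_le_mul_of_nonneg_left hrest (hy b)) ((hy b).trans (hyS b))
    _ = y b * (S * S ^ ∑ i ∈ univ.erase b, δ i) := by ring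

theorem prod_rpow_div_sum_rpow_pow_le {ι : Type*} [Fintype ι] {x : ι → ℝ} (hx : ∀ i, 0 < x i)
    {δ : ι → ℕ} (a : ι) {b : ι} (hb : δ b = 1) (β : ℝ) :
    (∏ i, x i ^ ((δ i : ℝ) * β)) / (∑ i, x i ^ β) ^ (∑ i, δ i : ℕ) ≤ (x b / x a) ^ β := by
  set y := fun i => x i ^ β
  set S := ∑ i, y i
  set m := ∑ i, δ i
  have hy : ∀ i, 0 < y i := fun i => Real.rpow_pos_of_pos (hx i) β
  have hS : 0 < S := sum_pos (fun i _ => hy i) ⟨a, mem_univ a⟩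
  have hP : ∏ i, x i ^ ((δ i : ℝ) * β) = ∏ i, y i ^ δ i := by
    refine prod_congr rfl fun i _ => ?_
    rw [mul_comm, Real.rpow_mul (hx i).le, Real.rpow_natCast]
  rw [hP, Real.div_rpow (hx b).le (hx a).le, div_le_iff₀ (pow_pos hS _)]
  calc ∏ i, y i ^ δ i ≤ y b * S ^ m / S :=
        (le_div_iff₀ hS).2 (prod_pow_mul_sum_le (fun i => (hy i).le) hb)
    _ ≤ y b * S ^ m / y a :=
        div_le_div_of_nonneg_left (mul_nonneg (hy b).le (pow_nonneg hS.le m)) (hy a)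
          (single_le_sum (fun i _ => (hy i).le) (mem_univ a))
    _ = y b / y a * S ^ m := by ring

theorem lintegral_rpow_mul_exp_neg_mul_rpow_eq_Gamma {s β S : ℝ} (hs : 0 < s) (hβ : 0 < β)
    (hS : 0 < S) :
    ∫⁻ η in Ioi (0:ℝ), ENNReal.ofReal (η ^ (s * β - 1) * Real.exp (-S * η ^ β)) =
      ENNReal.ofReal (Real.Gamma s / (β * S ^ s)) := by
  have hsβ : -1 < s * β - 1 := by nlinarith
  rw [← ofReal_integral_eq_lintegral_ofReal
      (integrableOn_rpow_mul_exp_neg_mul_rpow hsβ hβ hS)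
      (ae_restrict_of_forall_mem measurableSet_Ioi fun η (hη : 0 < η) => by positivity),
    integral_rpow_mul_exp_neg_mul_rpow hβ hsβ hS, sub_add_cancel, neg_div,
    mul_div_cancel_right₀ s hβ.ne', Real.rpow_neg hS.le]
  congr 1
  field_simp

theorem integrableOn_rpow_mul_rpow_of_lt_one {s c : ℝ} (hs : -1 < s) (hc₀ : 0 < c)
    (hc₁ : c < 1) : IntegrableOn (fun β : ℝ => β ^ s * c ^ β) (Ioi 0) := by
  refine (integrableOn_rpow_mul_exp_neg_mul_rpow hs one_pos
    (neg_pos.2 (Real.log_neg hc₀ hc₁))).congr_fun (fun β _ => ?_) measurableSet_Ioi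
  simp only [Real.rpow_one, neg_neg, Real.rpow_def_of_pos hc₀, mul_comm (Real.log c)]

theorem lintegral_weibull_posterior_le {ι : Type*} [Fintype ι] {x : ι → ℝ} (hx : ∀ i, 0 < x i)
    {δ : ι → ℕ} {m : ℕ} (hm : m = ∑ i, δ i) (a : ι) {b : ι} (hb : δ b = 1) (q k : ℝ) {β : ℝ}
    (hβ : 0 < β) :
    ∫⁻ η in Ioi (0:ℝ), ENNReal.ofReal (β ^ k * η ^ ((m : ℝ) * β - 1) * β ^ ((m : ℝ) + q) *
        (∏ i, x i ^ ((δ i : ℝ) * β)) * Real.exp (-(∑ i, x i ^ β) * η ^ β)) ≤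
      ENNReal.ofReal (Real.Gamma m * (β ^ (k + m + q - 1) * (x b / x a) ^ β)) := by
  set S := ∑ i, x i ^ β
  set P := ∏ i, x i ^ ((δ i : ℝ) * β)
  have hS : 0 < S := sum_pos (fun i _ => Real.rpow_pos_of_pos (hx i) β) ⟨b, mem_univ b⟩
  have hm₀ : (0:ℝ) < m := by
    have : δ b ≤ m := hm ▸ single_le_sum (fun i _ => Nat.zero_le (δ i)) (mem_univ b)
    exact_mod_cast hb ▸ this
  have hP : 0 ≤ P := prod_nonneg fun i _ => (Real.rpow_pos_of_pos (hx i) _).le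
  have hc : 0 ≤ β ^ k * β ^ ((m:ℝ) + q) * P := by positivity
  calc _ = ∫⁻ η in Ioi (0:ℝ), ENNReal.ofReal (β ^ k * β ^ ((m:ℝ) + q) * P) *
          ENNReal.ofReal (η ^ ((m : ℝ) * β - 1) * Real.exp (-S * η ^ β)) := by
        refine lintegral_congr fun η => ?_
        rw [← ENNReal.ofReal_mul hc]
        ring_nf
    _ = ENNReal.ofReal (β ^ k * β ^ ((m:ℝ) + q) * P * (Real.Gamma m / (β * S ^ (m:ℝ)))) := by
        rw [lintegral_const_mul' _ _ ENNReal.ofReal_ne_top,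
          lintegral_rpow_mul_exp_neg_mul_rpow_eq_Gamma hm₀ hβ hS, ← ENNReal.ofReal_mul hc]
    _ ≤ _ := by
        refine ENNReal.ofReal_le_ofReal ?_
        have hpow : β ^ (k + m + q - 1) = β ^ k * β ^ ((m:ℝ) + q) / β := by
          rw [Real.rpow_sub_one hβ.ne', add_assoc, Real.rpow_add hβ]
        have hratio : P / S ^ m ≤ (x b / x a) ^ β :=
          hm ▸ prod_rpow_div_sum_rpow_pow_le hx a hb β
        rw [Real.rpow_natCast, hpow]
        calc β ^ k * β ^ ((m:ℝ) + q) * P * (Real.Gamma m / (β * S ^ m))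
            = Real.Gamma m * (β ^ k * β ^ ((m:ℝ) + q) / β * (P / S ^ m)) := by ring
          _ ≤ _ := by gcongr

theorem stmt_12_general (n : ℕ) (x : Fin n → ℝ) (hx : ∀ i, 0 < x i) (δ : Fin n → ℕ)
    (m : ℕ) (hm : m = ∑ i, δ i)
    (hdist : ∃ i j, i ≠ j ∧ δ i = 1 ∧ δ j = 1 ∧ x i ≠ x j) (q : ℝ) (hq : -(m : ℝ) < q)
    (k : ℝ) (hk : 0 < k) :
    (∫⁻ β in Ioi (0:ℝ), ∫⁻ η in Ioi (0:ℝ),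
        ENNReal.ofReal (β ^ k * η ^ ((m : ℝ) * β - 1) * β ^ ((m : ℝ) + q) *
          (∏ i, x i ^ ((δ i : ℝ) * β)) * Real.exp (-(∑ i, x i ^ β) * η ^ β))) < ⊤ := by
  obtain ⟨a, b, hb, hba⟩ : ∃ a b, δ b = 1 ∧ x b < x a := by
    obtain ⟨i, j, -, hi, hj, hne⟩ := hdist
    rcases hne.lt_or_gt with h | h
    exacts [⟨j, i, hi, h⟩, ⟨i, j, hj, h⟩]
  have hint : IntegrableOn (fun β : ℝ => β ^ (k + m + q - 1) * (x b / x a) ^ β) (Ioi 0) :=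
    integrableOn_rpow_mul_rpow_of_lt_one (by linarith) (div_pos (hx b) (hx a))
      ((div_lt_one (hx a)).2 hba)
  calc _ ≤ ∫⁻ β in Ioi (0:ℝ),
          ENNReal.ofReal (Real.Gamma m * (β ^ (k + m + q - 1) * (x b / x a) ^ β)) :=
        setLIntegral_mono' measurableSet_Ioi fun β hβ =>
          lintegral_weibull_posterior_le hx hm a hb q k hβ
    _ < ⊤ := (hint.const_mul _).lintegral_lt_top

theorem stmt_12 (n : ℕ) (x : Fin n → ℝ) (hx : ∀ i, 0 < x i) (δ : Fin n → ℕ)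
    (hδ : ∀ i, δ i = 0 ∨ δ i = 1) (m : ℕ) (hm : m = ∑ i, δ i) (hm2 : 2 ≤ m)
    (hdist : ∃ i j, i ≠ j ∧ δ i = 1 ∧ δ j = 1 ∧ x i ≠ x j) (q : ℝ) (hq : -(m : ℝ) < q)
    (k : ℝ) (hk : 0 < k) :
    (∫⁻ β in Ioi (0:ℝ), ∫⁻ η in Ioi (0:ℝ),
        ENNReal.ofReal (β ^ k * η ^ ((m : ℝ) * β - 1) * β ^ ((m : ℝ) + q) *
          (∏ i, x i ^ ((δ i : ℝ) * β)) * Real.exp (-(∑ i, x i ^ β) * η ^ β))) < ⊤ :=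
  stmt_12_general n x hx δ m hm hdist q hq k hk
end

section
/- Under the Weibull model with prior π(η,β) ∝ η^(−1) β^q where the posterior is proper, for every k > 0 the posterior expectation of η^k is infinite: ∫₀^∞ ∫₀^∞ η^k · η^(mβ−1) β^(m+q) (∏ x_i^{δᵢβ}) exp(−(∑ x_i^β) η^β) dη dβ = ∞. -/
open MeasureTheory Set Finset

-- auxiliary: divergence of ∫ K * β^s on (0,1) for s ≤ -1
lemma aux_div (K s : ℝ) (hK : 0 < K) (hs : s ≤ -1) :
    ∫⁻ β in Ioo (0:ℝ) 1, ENNReal.ofReal (K * β ^ s) = ⊤ := by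
  by_contra h
  have hmeas : Measurable fun β : ℝ => K * β ^ s := by fun_prop
  have hnn : 0 ≤ᵐ[volume.restrict (Ioo (0:ℝ) 1)] fun β : ℝ => K * β ^ s := by
    refine (ae_restrict_iff' measurableSet_Ioo).2 (ae_of_all _ fun β hβ => ?_)
    exact mul_nonneg hK.le (Real.rpow_nonneg hβ.1.le s)
  have hint : IntegrableOn (fun β : ℝ => K * β ^ s) (Ioo (0:ℝ) 1) :=
    ⟨hmeas.aestronglyMeasurable, (hasFiniteIntegral_iff_ofReal hnn).2 (lt_top_iff_ne_top.2 h)⟩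
  have hint2 : IntegrableOn (fun β : ℝ => β ^ s) (Ioo (0:ℝ) 1) := by
    have h2 := hint.const_mul K⁻¹
    have he : (fun β : ℝ => β ^ s) = fun β : ℝ => K⁻¹ * (K * β ^ s) := by
      funext β; field_simp
    rwa [he]
  have := (intervalIntegral.integrableOn_Ioo_rpow_iff one_pos).1 hint2
  linarith

theorem stmt_13 (n : ℕ) (x : Fin n → ℝ) (hx : ∀ i, 0 < x i) (δ : Fin n → ℕ)
    (hδ : ∀ i, δ i = 0 ∨ δ i = 1) (m : ℕ) (hm : m = ∑ i, δ i) (hm2 : 2 ≤ m)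
    (hdist : ∃ i j, i ≠ j ∧ δ i = 1 ∧ δ j = 1 ∧ x i ≠ x j) (q : ℝ) (hq : -(m : ℝ) < q)
    (k : ℝ) (hk : 0 < k) :
    (∫⁻ β in Ioi (0:ℝ), ∫⁻ η in Ioi (0:ℝ),
        ENNReal.ofReal (η ^ k * η ^ ((m : ℝ) * β - 1) * β ^ ((m : ℝ) + q) *
          (∏ i, x i ^ ((δ i : ℝ) * β)) * Real.exp (-(∑ i, x i ^ β) * η ^ β))) = ⊤ := by
  classical
  set c : ℝ := ∏ i, min (x i) 1 with hc_def
  have hc : 0 < c := Finset.prod_pos fun i _ => lt_min (hx i) one_pos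
  set C : ℝ := ∑ i, (x i + 1) with hC_def
  have hC0 : 0 ≤ C := Finset.sum_nonneg fun i _ => by linarith [hx i]
  set N : ℕ := ⌈(m : ℝ) + q + 1⌉₊ with hN_def
  have hN : (m : ℝ) + q + 1 ≤ N := Nat.le_ceil _
  set K0 : ℝ := c * Real.exp (-(2 * C)) * (2:ℝ) ^ (-k) / 2 with hK0_def
  have hK0 : 0 < K0 := by
    have := Real.exp_pos (-(2 * C))
    have := Real.rpow_pos_of_pos (by norm_num : (0:ℝ) < 2) (-k)
    positivity
  set K' : ℝ := K0 * ((Real.log 2 * k) ^ N / (N.factorial : ℝ)) with hK'_def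
  have hlog2 : 0 < Real.log 2 := Real.log_pos one_lt_two
  have hK' : 0 < K' := by positivity
  set s : ℝ := (m : ℝ) + q - N with hs_def
  have hs : s ≤ -1 := by simp only [hs_def]; linarith
  -- key per-β lower bound
  have key : ∀ β ∈ Ioo (0:ℝ) 1,
      ENNReal.ofReal (K' * β ^ s) ≤ ∫⁻ η in Ioi (0:ℝ),
        ENNReal.ofReal (η ^ k * η ^ ((m : ℝ) * β - 1) * β ^ ((m : ℝ) + q) *
          (∏ i, x i ^ ((δ i : ℝ) * β)) * Real.exp (-(∑ i, x i ^ β) * η ^ β)) := by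
    rintro β ⟨hβ0, hβ1⟩
    set T : ℝ := (2:ℝ) ^ ((1:ℝ)/β) with hT_def
    have h1β : 1 ≤ 1/β := by rw [le_div_iff₀ hβ0]; linarith
    have hT2 : (2:ℝ) ≤ T := by
      calc (2:ℝ) = 2 ^ (1:ℝ) := (Real.rpow_one 2).symm
        _ ≤ T := Real.rpow_le_rpow_of_exponent_le one_le_two h1β
    have hTpos : (0:ℝ) < T := by linarith
    have hT1 : (1:ℝ) ≤ T / 2 := by linarith
    have hTβ : T ^ β = 2 := by
      rw [hT_def, ← Real.rpow_mul (by norm_num : (0:ℝ) ≤ 2),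
        one_div_mul_cancel hβ0.ne', Real.rpow_one]
    set L : ℝ := (T/2) ^ k * T⁻¹ * β ^ ((m : ℝ) + q) * c * Real.exp (-(2 * C)) with hL_def
    -- pointwise bound on (T/2, T)
    have hpt : ∀ η ∈ Ioo (T/2) T,
        ENNReal.ofReal L ≤ ENNReal.ofReal (η ^ k * η ^ ((m : ℝ) * β - 1) * β ^ ((m : ℝ) + q) *
          (∏ i, x i ^ ((δ i : ℝ) * β)) * Real.exp (-(∑ i, x i ^ β) * η ^ β)) := by
      rintro η ⟨hη1, hη2⟩
      have hη0 : (0:ℝ) < η := lt_of_lt_of_le (by linarith) hη1.le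
      have hη1' : (1:ℝ) ≤ η := le_trans hT1 hη1.le
      apply ENNReal.ofReal_le_ofReal
      have f1 : (T/2) ^ k ≤ η ^ k := Real.rpow_le_rpow (by linarith) hη1.le hk.le
      have f2 : T⁻¹ ≤ η ^ ((m : ℝ) * β - 1) := by
        have h1 : η ^ (-1:ℝ) ≤ η ^ ((m : ℝ) * β - 1) := by
          apply Real.rpow_le_rpow_of_exponent_le hη1'
          have : (0:ℝ) ≤ (m:ℝ) * β := mul_nonneg (Nat.cast_nonneg m) hβ0.le
          linarith
        rw [Real.rpow_neg_one] at h1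
        exact le_trans (by exact inv_anti₀ hη0 hη2.le) h1
      have f4 : c ≤ ∏ i, x i ^ ((δ i : ℝ) * β) := by
        apply Finset.prod_le_prod (fun i _ => (lt_min (hx i) one_pos).le)
        intro i _
        rcases hδ i with h0 | h1
        · rw [h0]; push_cast; rw [zero_mul, Real.rpow_zero]; exact min_le_right _ _
        · rw [h1]; push_cast; rw [one_mul]
          rcases le_or_gt 1 (x i) with hx1 | hx1
          · refine le_trans (min_le_right _ _) ?_
            calc (1:ℝ) = 1 ^ β := (Real.one_rpow β).symm
              _ ≤ x i ^ β := Real.rpow_le_rpow (by norm_num) hx1 hβ0.le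
          · refine le_trans (min_le_left _ _) ?_
            calc x i = x i ^ (1:ℝ) := (Real.rpow_one _).symm
              _ ≤ x i ^ β := Real.rpow_le_rpow_of_exponent_ge (hx i) hx1.le hβ1.le
      have f5 : Real.exp (-(2 * C)) ≤ Real.exp (-(∑ i, x i ^ β) * η ^ β) := by
        rw [Real.exp_le_exp, neg_mul, neg_le_neg_iff]
        have hS : (∑ i, x i ^ β) ≤ C := by
          apply Finset.sum_le_sum
          intro i _
          rcases le_or_gt (x i) 1 with hx1 | hx1
          · calc x i ^ β ≤ 1 ^ β := Real.rpow_le_rpow (hx i).le hx1 hβ0.le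
              _ = 1 := Real.one_rpow β
              _ ≤ x i + 1 := by linarith [hx i]
          · calc x i ^ β ≤ x i ^ (1:ℝ) :=
                Real.rpow_le_rpow_of_exponent_le hx1.le hβ1.le
              _ = x i := Real.rpow_one _
              _ ≤ x i + 1 := by linarith
        have hηβ : η ^ β ≤ 2 := by
          calc η ^ β ≤ T ^ β := Real.rpow_le_rpow hη0.le hη2.le hβ0.le
            _ = 2 := hTβ
        have hS0 : 0 ≤ ∑ i, x i ^ β :=
          Finset.sum_nonneg fun i _ => Real.rpow_nonneg (hx i).le β
        calc (∑ i, x i ^ β) * η ^ β ≤ C * 2 :=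
              mul_le_mul hS hηβ (Real.rpow_nonneg hη0.le β) hC0
          _ = 2 * C := by ring
      have hb2 : (0:ℝ) ≤ η ^ ((m : ℝ) * β - 1) := Real.rpow_nonneg hη0.le _
      have hb3 : (0:ℝ) ≤ β ^ ((m : ℝ) + q) := Real.rpow_nonneg hβ0.le _
      have hb4 : (0:ℝ) ≤ ∏ i, x i ^ ((δ i : ℝ) * β) := le_trans hc.le f4
      rw [hL_def]
      have hbk : (0:ℝ) ≤ η ^ k := Real.rpow_nonneg hη0.le k
      have t1 : (T/2) ^ k * T⁻¹ ≤ η ^ k * η ^ ((m : ℝ) * β - 1) :=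
        mul_le_mul f1 f2 (inv_nonneg.2 hTpos.le) hbk
      have t2 := mul_le_mul_of_nonneg_right t1 hb3
      have t3 : (T/2) ^ k * T⁻¹ * β ^ ((m : ℝ) + q) * c ≤
          η ^ k * η ^ ((m : ℝ) * β - 1) * β ^ ((m : ℝ) + q) * ∏ i, x i ^ ((δ i : ℝ) * β) :=
        mul_le_mul t2 f4 hc.le (mul_nonneg (mul_nonneg hbk hb2) hb3)
      exact mul_le_mul t3 f5 (Real.exp_pos _).le
        (mul_nonneg (mul_nonneg (mul_nonneg hbk hb2) hb3) hb4)
  -- compute the constant integral over (T/2, T)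
    have hsub : Ioo (T/2) T ⊆ Ioi (0:ℝ) := fun η hη => lt_of_lt_of_le (by linarith) hη.1.le
    have hvol : (volume (Ioo (T/2) T)) = ENNReal.ofReal (T/2) := by
      rw [Real.volume_Ioo]; congr 1; ring
    -- real inequality K' * β ^ s ≤ L * (T/2)
    have hhalf : T/2 = (2:ℝ) ^ ((1:ℝ)/β - 1) := by
      rw [Real.rpow_sub (by norm_num : (0:ℝ) < 2), Real.rpow_one, hT_def]
    have hTk : (T/2) ^ k = (2:ℝ) ^ (k/β) * (2:ℝ) ^ (-k) := by
      rw [hhalf, ← Real.rpow_mul (by norm_num : (0:ℝ) ≤ 2),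
        show ((1:ℝ)/β - 1) * k = k/β + (-k) by ring,
        Real.rpow_add (by norm_num : (0:ℝ) < 2)]
    have hexp : (Real.log 2 * k) ^ N / (N.factorial : ℝ) * β ^ (-(N:ℝ)) ≤ (2:ℝ) ^ (k/β) := by
      have h2 : (2:ℝ) ^ (k/β) = Real.exp (Real.log 2 * (k/β)) := by
        rw [Real.rpow_def_of_pos (by norm_num : (0:ℝ) < 2)]
      have h3 := Real.pow_div_factorial_le_exp (Real.log 2 * (k/β))
        (mul_nonneg hlog2.le (by positivity : (0:ℝ) ≤ k/β)) N
      have h4 : (Real.log 2 * (k/β)) ^ N = (Real.log 2 * k) ^ N * β ^ (-(N:ℝ)) := by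
        rw [Real.rpow_neg hβ0.le, Real.rpow_natCast, show Real.log 2 * (k/β) =
          Real.log 2 * k * β⁻¹ by ring, mul_pow, inv_pow]
      rw [h2]
      calc (Real.log 2 * k) ^ N / (N.factorial : ℝ) * β ^ (-(N:ℝ))
          = (Real.log 2 * (k/β)) ^ N / (N.factorial : ℝ) := by rw [h4]; ring
        _ ≤ Real.exp (Real.log 2 * (k/β)) := h3
    have hβs : β ^ s = β ^ ((m:ℝ) + q) * β ^ (-(N:ℝ)) := by
      rw [← Real.rpow_add hβ0]
      congr 1
    have hKreal : K' * β ^ s ≤ L * (T/2) := by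
      have step : K' * β ^ s ≤ K0 * (β ^ ((m:ℝ) + q) * (2:ℝ) ^ (k/β)) := by
        rw [hK'_def, hβs]
        have hb3 : (0:ℝ) ≤ β ^ ((m : ℝ) + q) := Real.rpow_nonneg hβ0.le _
        calc K0 * ((Real.log 2 * k) ^ N / (N.factorial : ℝ)) * (β ^ ((m:ℝ) + q) * β ^ (-(N:ℝ)))
            = K0 * β ^ ((m:ℝ) + q) * ((Real.log 2 * k) ^ N / (N.factorial : ℝ) * β ^ (-(N:ℝ))) := by ring
          _ ≤ K0 * β ^ ((m:ℝ) + q) * (2:ℝ) ^ (k/β) := by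
              apply mul_le_mul_of_nonneg_left hexp (by positivity)
          _ = K0 * (β ^ ((m:ℝ) + q) * (2:ℝ) ^ (k/β)) := by ring
      refine le_trans step (le_of_eq ?_)
      rw [hL_def, hTk, hK0_def]
      field_simp
    calc ENNReal.ofReal (K' * β ^ s) ≤ ENNReal.ofReal (L * (T/2)) :=
          ENNReal.ofReal_le_ofReal hKreal
      _ = ENNReal.ofReal L * ENNReal.ofReal (T/2) := by
          rw [ENNReal.ofReal_mul (by positivity : (0:ℝ) ≤ L)]
      _ = ENNReal.ofReal L * volume (Ioo (T/2) T) := by rw [hvol]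
      _ = ∫⁻ _ in Ioo (T/2) T, ENNReal.ofReal L := (setLIntegral_const _ _).symm
      _ ≤ ∫⁻ η in Ioo (T/2) T,
            ENNReal.ofReal (η ^ k * η ^ ((m : ℝ) * β - 1) * β ^ ((m : ℝ) + q) *
              (∏ i, x i ^ ((δ i : ℝ) * β)) * Real.exp (-(∑ i, x i ^ β) * η ^ β)) :=
          setLIntegral_mono' measurableSet_Ioo hpt
      _ ≤ _ := lintegral_mono_set hsub
  -- assemble
  rw [eq_top_iff]
  calc (⊤ : ENNReal) = ∫⁻ β in Ioo (0:ℝ) 1, ENNReal.ofReal (K' * β ^ s) :=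
        (aux_div K' s hK' hs).symm
    _ ≤ ∫⁻ β in Ioo (0:ℝ) 1, ∫⁻ η in Ioi (0:ℝ),
          ENNReal.ofReal (η ^ k * η ^ ((m : ℝ) * β - 1) * β ^ ((m : ℝ) + q) *
            (∏ i, x i ^ ((δ i : ℝ) * β)) * Real.exp (-(∑ i, x i ^ β) * η ^ β)) :=
        setLIntegral_mono' measurableSet_Ioo key
    _ ≤ _ := lintegral_mono_set Ioo_subset_Ioi_self
end

section
/- For the Weibull model parametrized as f(x|θ,β) = β x^(β−1) θ^(−β) exp(−(x/θ)^β), with prior π(θ,β) ∝ θ^r β^q, and data x₁,…,xₙ > 0 with δᵢ ∈ {0,1}, m = ∑ δᵢ, at least two distinct uncensored observations: the integral ∫₀^∞ ∫₀^∞ θ^(−mβ+r) β^(m+q) (∏ x_i^{δᵢβ}) exp(−∑(x_i/θ)^β) dθ dβ is finite if and only if r = −1 and q > −m. -/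
/-!
Substituting `u = θ ^ (-β)` turns the inner integral into
`β⁻¹ · ∫₀^∞ u ^ (s - 1) e ^ (-S(β) u) du` with `s = m - (r + 1) / β` and `S(β) = ∑ xᵢ ^ β`.
For `r > -1` we have `s ≤ 0` for small `β`, so the inner integral diverges there.
For `r ≤ -1` and `β < 1` the Gamma integral is at least a constant times `exp (-(r + 1) / β)`,
which beats every power of `β` when `r < -1`, and leaves `β ^ (m + q - 1)`, not integrable at `0`,
when `r = -1` and `q ≤ -m`.
For `r = -1` the inner integral is `Γ(m) / (β S(β) ^ m)`, and two distinct uncensored observations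
`xᵢ < xⱼ` give `∏ xₖ ^ (δₖ β) ≤ (xᵢ / xⱼ) ^ β · S(β) ^ m`, an exponential decay in `β`
that makes the outer integral converge as soon as `q > -m`.
-/

open MeasureTheory Set Finset Real

open scoped ENNReal

lemma lintegral_Ioi_eq_top_of_div_le {f : ℝ → ℝ≥0∞} {K ε : ℝ} (hK : 0 < K) (hε : 0 < ε)
    (h : ∀ β ∈ Ioo 0 ε, ENNReal.ofReal (K / β) ≤ f β) : ∫⁻ β in Ioi 0, f β = ⊤ := by
  have hdiv : ∫⁻ β in Ioo 0 ε, ENNReal.ofReal (K * β ^ (-1 : ℝ)) = ⊤ := by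
    by_contra hfin
    have hnn : 0 ≤ᵐ[volume.restrict (Ioo 0 ε)] fun β : ℝ ↦ K * β ^ (-1 : ℝ) :=
      ae_restrict_of_forall_mem measurableSet_Ioo fun β hβ ↦ by have := hβ.1; positivity
    have hint := (lintegral_ofReal_ne_top_iff_integrable (by fun_prop) hnn).mp hfin
    have := (intervalIntegral.integrableOn_Ioo_rpow_iff hε).mp
      ((integrable_const_mul_iff (isUnit_iff_ne_zero.mpr hK.ne') _).mp hint)
    norm_num at this
  refine eq_top_iff.mpr (hdiv ▸ ?_)
  calc ∫⁻ β in Ioo 0 ε, ENNReal.ofReal (K * β ^ (-1 : ℝ))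
      ≤ ∫⁻ β in Ioo 0 ε, f β := setLIntegral_mono' measurableSet_Ioo fun β hβ ↦ by
        rw [Real.rpow_neg_one, ← div_eq_mul_inv]; exact h β hβ
    _ ≤ ∫⁻ β in Ioi 0, f β := lintegral_mono_set Ioo_subset_Ioi_self

lemma exists_pos_div_le_rpow_mul_exp_div {p c : ℝ} (hc : 0 ≤ c) (h : 0 < c ∨ p ≤ -1) :
    ∃ K > 0, ∀ β ∈ Ioo (0 : ℝ) 1, K / β ≤ β ^ p * exp (c / β) := by
  obtain ⟨k, hk, hck⟩ : ∃ k : ℕ, p ≤ k - 1 ∧ 0 < c ^ k := by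
    rcases h with hc | hp
    · exact ⟨⌈p + 1⌉₊, by linarith [Nat.le_ceil (p + 1)], by positivity⟩
    · exact ⟨0, by simpa using hp, by simp⟩
  refine ⟨c ^ k / k.factorial, by positivity, fun β ⟨hβ0, hβ1⟩ ↦ ?_⟩
  calc c ^ k / k.factorial / β = β ^ ((k : ℝ) - 1) * ((c / β) ^ k / k.factorial) := by
        rw [Real.rpow_sub hβ0, Real.rpow_one, Real.rpow_natCast, div_pow]; field_simp
    _ ≤ β ^ p * exp (c / β) :=
        mul_le_mul (Real.rpow_le_rpow_of_exponent_ge hβ0 hβ1.le hk)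
          (pow_div_factorial_le_exp _ (by positivity) k) (by positivity) (by positivity)

lemma prod_pow_mul_le_mul_sum_pow {ι : Type*} [Fintype ι] {f : ι → ℝ}
    (hf : ∀ k, 0 ≤ f k) (d : ι → ℕ) {i : ι} (hi : d i ≠ 0) (j : ι) :
    (∏ k, f k ^ d k) * f j ≤ f i * (∑ k, f k) ^ ∑ k, d k := by
  classical
  obtain ⟨e, he⟩ := Nat.exists_eq_add_one_of_ne_zero hi
  set S := ∑ k, f k
  have hle : ∀ k, f k ≤ S := fun k ↦ single_le_sum (fun k _ ↦ hf k) (mem_univ k)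
  have hS : 0 ≤ S := (hf i).trans (hle i)
  have hpow : f i ^ e ≤ S ^ e := pow_le_pow_left₀ (hf i) (hle i) e
  have hprod : ∏ k ∈ univ.erase i, f k ^ d k ≤ ∏ k ∈ univ.erase i, S ^ d k :=
    prod_le_prod (fun k _ ↦ pow_nonneg (hf k) _) fun k _ ↦ pow_le_pow_left₀ (hf k) (hle k) _
  calc (∏ k, f k ^ d k) * f j
      = f i * (f i ^ e * (∏ k ∈ univ.erase i, f k ^ d k) * f j) := by
        rw [← mul_prod_erase univ _ (mem_univ i), he]
        ring
    _ ≤ f i * (S ^ e * (∏ k ∈ univ.erase i, S ^ d k) * S) :=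
        mul_le_mul_of_nonneg_left (mul_le_mul (mul_le_mul hpow hprod
          (prod_nonneg fun k _ ↦ pow_nonneg (hf k) _) (pow_nonneg hS e)) (hle j) (hf j)
          (mul_nonneg (pow_nonneg hS e) (prod_nonneg fun k _ ↦ pow_nonneg hS _))) (hf i)
    _ = f i * S ^ ∑ k, d k := by
        rw [prod_pow_eq_pow_sum, ← add_sum_erase univ _ (mem_univ i), he]
        ring

lemma lintegral_comp_rpow_Ioi (g : ℝ → ℝ≥0∞) {p : ℝ} (hp : p ≠ 0) :
    ∫⁻ x in Ioi 0, ENNReal.ofReal (|p| * x ^ (p - 1)) * g (x ^ p) = ∫⁻ y in Ioi 0, g y := by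
  have himage : (· ^ p) '' Ioi 0 = Ioi (0 : ℝ) := by
    ext y; constructor
    · rintro ⟨x, hx, rfl⟩; exact rpow_pos_of_pos hx p
    · exact fun hy ↦ ⟨y ^ (1 / p), rpow_pos_of_pos hy _, by simp [← rpow_mul (le_of_lt hy), hp]⟩
  have hsubst := lintegral_image_eq_lintegral_abs_deriv_mul measurableSet_Ioi
    (fun x hx ↦ (hasDerivAt_rpow_const (Or.inl (mem_Ioi.mp hx).ne')).hasDerivWithinAt)
    ((rpow_left_injOn hp).mono fun x (hx : 0 < x) ↦ hx.le) g
  rw [himage] at hsubst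
  rw [hsubst]
  refine setLIntegral_congr_fun measurableSet_Ioi fun x hx ↦ ?_
  rw [abs_mul, abs_of_nonneg (rpow_nonneg (mem_Ioi.mp hx).le _)]

/-- `Γ(s) b ^ (-s)` as a Lebesgue integral: it is `⊤`, not `0`, when the integral diverges. -/
noncomputable def gammaLIntegral (s b : ℝ) : ℝ≥0∞ :=
  ∫⁻ u in Ioi 0, ENNReal.ofReal (u ^ (s - 1) * exp (-(b * u)))

lemma lintegral_rpow_mul_exp_neg_mul_rpow_neg {a b β : ℝ} (hβ : 0 < β) :
    ∫⁻ θ in Ioi 0, ENNReal.ofReal (θ ^ a * exp (-(b * θ ^ (-β))))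
      = ENNReal.ofReal (1 / β) * gammaLIntegral (-(a + 1) / β) b := by
  have hsubst := lintegral_comp_rpow_Ioi
    (fun u ↦ ENNReal.ofReal (u ^ (-(a + 1) / β - 1) * exp (-(b * u)))) (neg_ne_zero.mpr hβ.ne')
  rw [gammaLIntegral, ← hsubst, ← lintegral_const_mul' _ _ ENNReal.ofReal_ne_top]
  refine setLIntegral_congr_fun measurableSet_Ioi fun θ (hθ : 0 < θ) ↦ ?_
  rw [← ENNReal.ofReal_mul (by positivity), ← ENNReal.ofReal_mul (by positivity)]
  congr 1
  have hpow : θ ^ (-β - 1) * θ ^ (-β * (-(a + 1) / β - 1)) = θ ^ a := by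
    rw [← rpow_add hθ]; congr 1; field_simp; ring
  rw [abs_neg, abs_of_pos hβ, ← rpow_mul hθ.le, ← hpow]
  field_simp

lemma gammaLIntegral_of_pos {s b : ℝ} (hs : 0 < s) (hb : 0 < b) :
    gammaLIntegral s b = ENNReal.ofReal ((1 / b) ^ s * Gamma s) := by
  have hint : IntegrableOn (fun u ↦ u ^ (s - 1) * exp (-(b * u))) (Ioi 0) := by
    simpa only [rpow_one, neg_mul] using
      integrableOn_rpow_mul_exp_neg_mul_rpow (s := s - 1) (p := 1) (by linarith) one_pos hb
  rw [gammaLIntegral, ← integral_rpow_mul_exp_neg_mul_Ioi hs hb,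
    ofReal_integral_eq_lintegral_ofReal hint
      (ae_restrict_of_forall_mem measurableSet_Ioi fun u hu ↦ by have : 0 < u := hu; positivity)]

lemma gammaLIntegral_eq_top {s : ℝ} (b : ℝ) (hs : s ≤ 0) : gammaLIntegral s b = ⊤ := by
  refine lintegral_Ioi_eq_top_of_div_le (exp_pos (-|b|)) one_pos fun u ⟨hu0, hu1⟩ ↦ ?_
  refine ENNReal.ofReal_le_ofReal ?_
  calc exp (-|b|) / u = u ^ (-1 : ℝ) * exp (-|b|) := by rw [Real.rpow_neg_one]; ring
    _ ≤ u ^ (s - 1) * exp (-(b * u)) := by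
        refine mul_le_mul (Real.rpow_le_rpow_of_exponent_ge hu0 hu1.le (by linarith))
          (exp_le_exp.mpr ?_) (by positivity) (by positivity)
        have : b * u ≤ |b| := by
          calc b * u ≤ |b| * u := by gcongr; exact le_abs_self b
            _ ≤ |b| := mul_le_of_le_one_right (abs_nonneg b) hu1.le
        linarith

lemma ofReal_exp_le_gammaLIntegral {s b : ℝ} (hs : 1 ≤ s) (hb : 0 ≤ b) :
    ENNReal.ofReal (exp (s - 1) * exp (-(b * (exp 1 + 1)))) ≤ gammaLIntegral s b := by
  set c := exp (s - 1) * exp (-(b * (exp 1 + 1)))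
  calc ENNReal.ofReal c = ∫⁻ _ in Ioo (exp 1) (exp 1 + 1), ENNReal.ofReal c := by
        simp [Real.volume_Ioo]
    _ ≤ ∫⁻ u in Ioo (exp 1) (exp 1 + 1), ENNReal.ofReal (u ^ (s - 1) * exp (-(b * u))) := by
        refine setLIntegral_mono' measurableSet_Ioo fun u ⟨hu1, hu2⟩ ↦ ENNReal.ofReal_le_ofReal ?_
        have hu0 : 0 < u := (exp_pos 1).trans hu1
        refine mul_le_mul ?_ (exp_le_exp.mpr (by nlinarith)) (by positivity) (by positivity)
        calc exp (s - 1) = exp 1 ^ (s - 1) := by rw [← exp_mul, one_mul]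
          _ ≤ u ^ (s - 1) := by gcongr
    _ ≤ gammaLIntegral s b := lintegral_mono_set fun u hu ↦ (exp_pos 1).trans hu.1

-- `P β` and `S β` stand for `∏ xᵢ ^ (δᵢ β)` and `∑ xᵢ ^ β`, as in `lintegral_weibull_kernel`.
section Marginal

variable {m q r : ℝ} {P S : ℝ → ℝ}

lemma lintegral_marginal_eq_top_of_neg_one_lt (hm : 0 < m) (hr : -1 < r) (hP : ∀ β, 0 < P β) :
    ∫⁻ β in Ioi 0, ENNReal.ofReal (β ^ (m + q) * P β) *
      (ENNReal.ofReal (1 / β) * gammaLIntegral (m - (r + 1) / β) (S β)) = ⊤ := by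
  refine lintegral_Ioi_eq_top_of_div_le one_pos (div_pos (neg_lt_iff_pos_add'.mp hr) hm)
    fun β ⟨hβ0, hβ⟩ ↦ ?_
  have hs : m - (r + 1) / β ≤ 0 := by
    rw [sub_nonpos, le_div_iff₀ hβ0]
    rw [lt_div_iff₀ hm] at hβ
    linarith
  rw [gammaLIntegral_eq_top _ hs, ENNReal.mul_top (ENNReal.ofReal_pos.mpr (by positivity)).ne',
    ENNReal.mul_top (ENNReal.ofReal_pos.mpr (by have := hP β; positivity)).ne']
  exact le_top

lemma lintegral_marginal_eq_top_of_le_neg_one (hm : 1 ≤ m) (hr : r ≤ -1) (h : r < -1 ∨ m + q ≤ 0)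
    (hP : Continuous P) (hP0 : ∀ β, 0 < P β) (hS : Continuous S) (hS0 : ∀ β, 0 ≤ S β) :
    ∫⁻ β in Ioi 0, ENNReal.ofReal (β ^ (m + q) * P β) *
      (ENNReal.ofReal (1 / β) * gammaLIntegral (m - (r + 1) / β) (S β)) = ⊤ := by
  obtain ⟨β₀, -, hβ₀⟩ := isCompact_Icc.exists_isMinOn (nonempty_Icc.mpr zero_le_one)
    (hP.mul (by fun_prop : Continuous fun β ↦ exp (-(S β * (exp 1 + 1))))).continuousOn
  set K₀ := P β₀ * exp (-(S β₀ * (exp 1 + 1)))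
  have hK₀ : 0 < K₀ := by have := hP0 β₀; positivity
  obtain ⟨K₁, hK₁, hdiv⟩ := exists_pos_div_le_rpow_mul_exp_div (p := m + q - 1) (c := -(r + 1))
    (by linarith) (by rcases h with h | h; exacts [Or.inl (by linarith), Or.inr (by linarith)])
  refine lintegral_Ioi_eq_top_of_div_le (K := K₁ * (exp (m - 1) * K₀)) (by positivity) one_pos
    fun β hβ ↦ ?_
  have hβ0 : 0 < β := hβ.1
  have hs : 1 ≤ m - (r + 1) / β := by
    have : 0 ≤ -(r + 1) / β := div_nonneg (by linarith) hβ0.le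
    rw [neg_div] at this
    linarith
  calc ENNReal.ofReal (K₁ * (exp (m - 1) * K₀) / β)
      ≤ ENNReal.ofReal (β ^ (m + q) * P β) * (ENNReal.ofReal (1 / β) *
          ENNReal.ofReal (exp (m - (r + 1) / β - 1) * exp (-(S β * (exp 1 + 1))))) := by
        have := hP0 β
        rw [← ENNReal.ofReal_mul (by positivity), ← ENNReal.ofReal_mul (by positivity)]
        refine ENNReal.ofReal_le_ofReal ?_
        have hmin : K₀ ≤ P β * exp (-(S β * (exp 1 + 1))) := hβ₀ (Ioo_subset_Icc_self hβ)
        have hpow : β ^ (m + q) * (1 / β) = β ^ (m + q - 1) := by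
          rw [rpow_sub_one hβ0.ne']; ring
        have hexp : exp (m - (r + 1) / β - 1) = exp (m - 1) * exp (-(r + 1) / β) := by
          rw [← exp_add]; ring_nf
        calc K₁ * (exp (m - 1) * K₀) / β = K₁ / β * (exp (m - 1) * K₀) := by ring
          _ ≤ β ^ (m + q - 1) * exp (-(r + 1) / β) *
                (exp (m - 1) * (P β * exp (-(S β * (exp 1 + 1))))) := by
            gcongr
            exact hdiv β hβ
          _ = _ := by rw [← hpow, hexp]; ring
    _ ≤ _ := by gcongr; exact ofReal_exp_le_gammaLIntegral hs (hS0 β)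

lemma lintegral_marginal_ne_top {b : ℝ} (hm : 0 < m) (hq : -m < q) (hb : 0 < b)
    (hS : ∀ β, 0 < S β) (hP0 : ∀ β, 0 ≤ P β) (hPS : ∀ β, P β ≤ exp (-(b * β)) * S β ^ m) :
    ∫⁻ β in Ioi 0, ENNReal.ofReal (β ^ (m + q) * P β) *
      (ENNReal.ofReal (1 / β) * gammaLIntegral m (S β)) ≠ ⊤ := by
  have hint : IntegrableOn (fun β ↦ Gamma m * (β ^ (m + q - 1) * exp (-(b * β)))) (Ioi 0) := by
    have := integrableOn_rpow_mul_exp_neg_mul_rpow (s := m + q - 1) (p := 1)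
      (by linarith) one_pos hb
    simp only [rpow_one, neg_mul] at this
    exact this.const_mul _
  refine ne_top_of_le_ne_top hint.lintegral_lt_top.ne
    (setLIntegral_mono' measurableSet_Ioi fun β (hβ : 0 < β) ↦ ?_)
  have hSm : 0 < S β ^ m := rpow_pos_of_pos (hS β) m
  have hratio : P β / S β ^ m ≤ exp (-(b * β)) := (div_le_iff₀ hSm).mpr (hPS β)
  have hG := Gamma_pos_of_pos hm
  rw [gammaLIntegral_of_pos hm (hS β), ← ENNReal.ofReal_mul (by positivity),
    ← ENNReal.ofReal_mul (by have := hP0 β; positivity)]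
  refine ENNReal.ofReal_le_ofReal ?_
  calc β ^ (m + q) * P β * (1 / β * ((1 / S β) ^ m * Gamma m))
      = Gamma m * (β ^ (m + q - 1) * (P β / S β ^ m)) := by
        rw [rpow_sub_one hβ.ne', div_rpow zero_le_one (hS β).le, one_rpow]; ring
    _ ≤ Gamma m * (β ^ (m + q - 1) * exp (-(b * β))) := by gcongr

end Marginal

section Weibull

variable {ι : Type*} [Fintype ι] {x : ι → ℝ}

lemma lintegral_weibull_kernel (hx : ∀ i, 0 ≤ x i) {m r β A B : ℝ} (hβ : 0 < β)
    (hAB : 0 ≤ A * B) :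
    ∫⁻ θ in Ioi 0, ENNReal.ofReal (θ ^ (-(m * β) + r) * A * B * exp (-∑ i, (x i / θ) ^ β))
      = ENNReal.ofReal (A * B) *
          (ENNReal.ofReal (1 / β) * gammaLIntegral (m - (r + 1) / β) (∑ i, x i ^ β)) := by
  have hs : -(-(m * β) + r + 1) / β = m - (r + 1) / β := by field_simp; ring
  rw [← hs, ← lintegral_rpow_mul_exp_neg_mul_rpow_neg hβ,
    ← lintegral_const_mul' _ _ ENNReal.ofReal_ne_top]
  refine setLIntegral_congr_fun measurableSet_Ioi fun θ (hθ : 0 < θ) ↦ ?_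
  have hsum : ∑ i, (x i / θ) ^ β = (∑ i, x i ^ β) * θ ^ (-β) := by
    rw [sum_mul]
    exact sum_congr rfl fun i _ ↦ by rw [div_rpow (hx i) hθ.le, rpow_neg hθ.le, div_eq_mul_inv]
  rw [hsum, ← ENNReal.ofReal_mul hAB]
  ring_nf

lemma prod_rpow_le_exp_mul_sum_rpow_pow (hx : ∀ i, 0 < x i) (δ : ι → ℕ) {i : ι} (hi : δ i ≠ 0)
    (j : ι) (β : ℝ) :
    ∏ k, x k ^ ((δ k : ℝ) * β)
      ≤ exp (-(log (x j / x i) * β)) * (∑ k, x k ^ β) ^ ((∑ k, δ k : ℕ) : ℝ) := by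
  have hexp : exp (-(log (x j / x i) * β)) = x i ^ β / x j ^ β := by
    rw [← div_rpow (hx i).le (hx j).le, rpow_def_of_pos (div_pos (hx i) (hx j)), ← inv_div, log_inv]
    ring_nf
  have hprod : ∏ k, x k ^ ((δ k : ℝ) * β) = ∏ k, (x k ^ β) ^ δ k :=
    prod_congr rfl fun k _ ↦ by rw [mul_comm, rpow_mul (hx k).le, rpow_natCast]
  rw [hexp, hprod, rpow_natCast, div_mul_eq_mul_div, le_div_iff₀ (rpow_pos_of_pos (hx j) β)]
  exact prod_pow_mul_le_mul_sum_pow (fun k ↦ (rpow_pos_of_pos (hx k) β).le) δ hi j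

end Weibull

theorem stmt_14_general (n : ℕ) (x : Fin n → ℝ) (hx : ∀ i, 0 < x i) (δ : Fin n → ℕ)
    (m : ℕ) (hm : m = ∑ i, δ i)
    (hdist : ∃ i j, i ≠ j ∧ δ i = 1 ∧ δ j = 1 ∧ x i ≠ x j) (r q : ℝ) :
    (∫⁻ β in Ioi (0:ℝ), ∫⁻ θ in Ioi (0:ℝ),
        ENNReal.ofReal (θ ^ (-((m : ℝ) * β) + r) * β ^ ((m : ℝ) + q) *
          (∏ i, x i ^ ((δ i : ℝ) * β)) * Real.exp (-∑ i, (x i / θ) ^ β))) ≠ ⊤ ↔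
      r = -1 ∧ -(m : ℝ) < q := by
  obtain ⟨i, j, hδi, hxij⟩ : ∃ i j, δ i = 1 ∧ x i < x j := by
    obtain ⟨i, j, -, hδi, hδj, hne⟩ := hdist
    rcases hne.lt_or_gt with h | h
    exacts [⟨i, j, hδi, h⟩, ⟨j, i, hδj, h⟩]
  have hm1 : (1 : ℝ) ≤ m := by
    have : δ i ≤ m := hm ▸ single_le_sum (fun k _ ↦ Nat.zero_le (δ k)) (mem_univ i)
    exact_mod_cast hδi ▸ this
  have hP : Continuous fun β : ℝ ↦ ∏ k, x k ^ ((δ k : ℝ) * β) := by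
    fun_prop (disch := exact (hx _).ne')
  have hS : Continuous fun β : ℝ ↦ ∑ k, x k ^ β := by fun_prop (disch := exact (hx _).ne')
  have hP0 : ∀ β : ℝ, 0 < ∏ k, x k ^ ((δ k : ℝ) * β) :=
    fun β ↦ prod_pos fun k _ ↦ rpow_pos_of_pos (hx k) _
  have hS0 : ∀ β : ℝ, 0 < ∑ k, x k ^ β :=
    fun β ↦ sum_pos (fun k _ ↦ rpow_pos_of_pos (hx k) _) ⟨i, mem_univ i⟩
  rw [setLIntegral_congr_fun measurableSet_Ioi fun β (hβ : 0 < β) ↦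
    lintegral_weibull_kernel (fun k ↦ (hx k).le) hβ (by have := hP0 β; positivity)]
  constructor
  · intro hfin
    by_contra hrq
    rcases lt_or_ge (-1) r with hr | hr
    · exact hfin (lintegral_marginal_eq_top_of_neg_one_lt (by linarith) hr hP0)
    · refine hfin (lintegral_marginal_eq_top_of_le_neg_one hm1 hr ?_ hP hP0 hS fun β ↦ (hS0 β).le)
      rcases hr.lt_or_eq with hr | rfl
      exacts [Or.inl hr, Or.inr (by linarith [not_lt.mp fun hq ↦ hrq ⟨rfl, hq⟩])]
  · rintro ⟨rfl, hq⟩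
    simp only [neg_add_cancel, zero_div, sub_zero]
    refine lintegral_marginal_ne_top (by linarith) hq (log_pos ((one_lt_div (hx i)).mpr hxij))
      hS0 (fun β ↦ (hP0 β).le) fun β ↦ ?_
    rw [hm]
    exact prod_rpow_le_exp_mul_sum_rpow_pow hx δ (by omega) j β

theorem stmt_14 (n : ℕ) (x : Fin n → ℝ) (hx : ∀ i, 0 < x i) (δ : Fin n → ℕ)
    (hδ : ∀ i, δ i = 0 ∨ δ i = 1) (m : ℕ) (hm : m = ∑ i, δ i)
    (hdist : ∃ i j, i ≠ j ∧ δ i = 1 ∧ δ j = 1 ∧ x i ≠ x j) (r q : ℝ) :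
    (∫⁻ β in Ioi (0:ℝ), ∫⁻ θ in Ioi (0:ℝ),
        ENNReal.ofReal (θ ^ (-((m : ℝ) * β) + r) * β ^ ((m : ℝ) + q) *
          (∏ i, x i ^ ((δ i : ℝ) * β)) * Real.exp (-∑ i, (x i / θ) ^ β))) ≠ ⊤ ↔
      r = -1 ∧ -(m : ℝ) < q :=
  stmt_14_general n x hx δ m hm hdist r q
end
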